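/- arXiv:1909.05902 — 4 statements merged into one kernel-verified Lean document; each statement's English description precedes it below -/
import Mathlib

section
/- The Bergman projection P on the bidisc 𝔻² is not of weak-type (1,1): there is no constant C > 0 such that for every f ∈ L¹(𝔻²) and every λ > 0 one has |{(z₁,z₂) ∈ 𝔻² : |P f(z₁,z₂)| > λ}| ≤ C ‖f‖_{L¹(𝔻²)} / λ, where |·| denotes Lebesgue measure. -/
/-!
Test the weak-type inequality on the indicator `f` of the polydisc `B × B`, `B = D(1 - ε, ε / 2)`.
The kernel is antiholomorphic in each variable, so by the mean value property over discs
`P f (z) = (ε / 2)⁴ / ((1 - (1 - ε) z₁)² (1 - (1 - ε) z₂)²)`, while `‖f‖₁ = π² (ε / 2)⁴`.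
Hence `|P f| ≳ ε²` on the region `|1 - (1 - ε) z₁| |1 - (1 - ε) z₂| < 9 ε`. For `ε = 2⁻ᴷ` this
region contains the `K + 1` disjoint products of boxes of sides `2ᵏ ε` and `2ᴷ⁻ᵏ ε` near `(1, 1)`,
each of measure `≈ ε²`, so the superlevel set has measure `≳ K ε²`, whereas weak type `(1, 1)`
would bound it by `C ε²`.
-/

open MeasureTheory Complex Set

noncomputable section

/-- The bidisc `𝔻² ⊂ ℂ²`. -/
def bidisc : Set (ℂ × ℂ) := {z | ‖z.1‖ < 1 ∧ ‖z.2‖ < 1}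

/-- The Bergman projection on the bidisc. -/
noncomputable def bergmanBidisc (f : ℂ × ℂ → ℂ) (z : ℂ × ℂ) : ℂ :=
  ∫ w in bidisc, f w /
    ((Real.pi : ℂ) ^ 2 * (1 - z.1 * (starRingEnd ℂ) w.1) ^ 2 *
      (1 - z.2 * (starRingEnd ℂ) w.2) ^ 2)

open Metric Real Function ComplexConjugate

section MeanValue

variable {E : Type*} [NormedAddCommGroup E] [NormedSpace ℂ E]

theorem setIntegral_ball_zero_comp_mul_left (f : ℂ → E) {u : ℂ} (hu : ‖u‖ = 1) (R : ℝ) :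
    ∫ w in ball (0 : ℂ) R, f (u * w) = ∫ w in ball (0 : ℂ) R, f w := by
  let e := rotation ⟨u, by simp [Submonoid.unitSphere, hu]⟩
  have hpre : e ⁻¹' ball 0 R = ball 0 R := by
    ext w; simp [e]
  have h := e.measurePreserving.setIntegral_preimage_emb e.toHomeomorph.measurableEmbedding f
    (ball 0 R)
  rwa [hpre] at h

theorem setIntegral_ball_eq_setIntegral_ball_zero (f : ℂ → E) (c : ℂ) (R : ℝ) :
    ∫ w in ball c R, f w = ∫ w in ball (0 : ℂ) R, f (c + w) := by
  have hpre : (c + ·) ⁻¹' ball c R = ball (0 : ℂ) R := by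
    ext w; simp [dist_eq_norm]
  rw [← hpre, (measurePreserving_add_left volume c).setIntegral_preimage_emb
    (measurableEmbedding_addLeft c)]

variable [CompleteSpace E]

/-- Averaging the rotated integrals `∫ f (e^{iθ} w) dw` over `θ` and swapping the integrals
turns the area integral into an integral of circle averages, each equal to `f 0`. -/
theorem DiffContOnCl.setIntegral_ball_zero {f : ℂ → E} {R : ℝ}
    (hf : DiffContOnCl ℂ f (ball 0 R)) :
    ∫ w in ball (0 : ℂ) R, f w = volume.real (ball (0 : ℂ) R) • f 0 := by
  rcases le_or_gt R 0 with hR | hR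
  · simp [ball_eq_empty.2 hR]
  have hrot (θ : ℝ) :
      ∫ w in ball (0 : ℂ) R, f (circleMap 0 1 θ * w) = ∫ w in ball (0 : ℂ) R, f w :=
    setIntegral_ball_zero_comp_mul_left f (by simp [circleMap_zero]) R
  have hmean : ∀ w ∈ ball (0 : ℂ) R, Real.circleAverage (fun ζ ↦ f (ζ * w)) 0 1 = f 0 := by
    intro w hw
    have hmaps : MapsTo (· * w) (ball (0 : ℂ) |1|) (ball 0 R) := by
      intro ζ hζ
      simp only [mem_ball_zero_iff, abs_one, norm_mul] at hζ hw ⊢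
      nlinarith [norm_nonneg w]
    simpa [comp_def] using
      (hf.comp (differentiable_id.mul_const w).diffContOnCl hmaps).circleAverage
  have hint : Integrable (uncurry fun θ w ↦ f (circleMap 0 1 θ * w))
      ((volume.restrict (Ioc 0 (2 * π))).prod (volume.restrict (ball (0 : ℂ) R))) := by
    rw [Measure.prod_restrict, ← Measure.volume_eq_prod]
    refine (ContinuousOn.integrableOn_compact (isCompact_Icc.prod (isCompact_closedBall 0 R))
      ?_).mono_set (prod_mono Ioc_subset_Icc_self ball_subset_closedBall)
    refine hf.continuousOn.comp (by fun_prop) fun p hp ↦ ?_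
    rw [closure_ball 0 hR.ne']
    simpa [circleMap_zero] using hp.2
  calc ∫ w in ball (0 : ℂ) R, f w
      = (2 * π)⁻¹ • ∫ θ in 0..2 * π, ∫ w in ball (0 : ℂ) R, f (circleMap 0 1 θ * w) := by
        simp only [hrot, intervalIntegral.integral_const, smul_smul]
        rw [sub_zero, inv_mul_cancel₀ (by positivity), one_smul]
    _ = ∫ w in ball (0 : ℂ) R, Real.circleAverage (fun ζ ↦ f (ζ * w)) 0 1 := by
        simp only [circleAverage_def]
        rw [intervalIntegral.integral_of_le (by positivity), integral_integral_swap hint,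
          integral_smul]
        simp only [intervalIntegral.integral_of_le (by positivity : (0 : ℝ) ≤ 2 * π)]
    _ = volume.real (ball (0 : ℂ) R) • f 0 := by
        rw [setIntegral_congr_fun measurableSet_ball hmean, setIntegral_const]

theorem DiffContOnCl.setIntegral_ball {f : ℂ → E} {c : ℂ} {R : ℝ}
    (hf : DiffContOnCl ℂ f (ball c R)) :
    ∫ w in ball c R, f w = volume.real (ball c R) • f c := by
  have hmaps : MapsTo (c + ·) (ball (0 : ℂ) R) (ball c R) := fun w hw ↦ by
    simpa [dist_eq_norm] using hw
  have hf₀ := (hf.comp (differentiable_id.const_add c).diffContOnCl hmaps).setIntegral_ball_zero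
  simp only [comp_def, id, add_zero] at hf₀
  rw [setIntegral_ball_eq_setIntegral_ball_zero, hf₀]
  simp [measureReal_def, Complex.volume_ball]

end MeanValue

theorem Complex.measureReal_ball (c : ℂ) {R : ℝ} (hR : 0 ≤ R) :
    volume.real (ball c R) = π * R ^ 2 := by
  simp [measureReal_def, Complex.volume_ball, ENNReal.toReal_ofReal hR, mul_comm]

theorem Complex.volume_reProdIm (s t : Set ℝ) : volume (s ×ℂ t) = volume s * volume t := by
  change volume (measurableEquivRealProd ⁻¹' (s ×ˢ t)) = _
  rw [volume_preserving_equiv_real_prod.measure_preimage_equiv, Measure.volume_eq_prod,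
    Measure.prod_prod]

theorem setIntegral_norm_indicator_one_of_subset {α E : Type*} [MeasurableSpace α] {μ : Measure α}
    [NormedRing E] [NormOneClass E] {S T : Set α} (hS : MeasurableSet S) (hST : S ⊆ T) :
    ∫ x in T, ‖S.indicator (1 : α → E) x‖ ∂μ = μ.real S := by
  simp only [norm_indicator_eq_indicator_norm, Pi.one_apply, norm_one]
  rw [integral_indicator hS, Measure.restrict_restrict hS, inter_eq_left.2 hST,
    setIntegral_const, smul_eq_mul, mul_one]

theorem one_sub_mul_ne_zero {u v : ℂ} (hu : ‖u‖ < 1) (hv : ‖v‖ ≤ 1) : 1 - u * v ≠ 0 := by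
  intro h
  have : ‖u * v‖ < 1 := by
    rw [norm_mul]
    nlinarith [norm_nonneg u, norm_nonneg v]
  simp [← sub_eq_zero.mp h] at this

/-- The kernel is antiholomorphic in `w`, so its conjugate has the mean value property. -/
theorem setIntegral_ball_inv_one_sub_mul_conj_sq {z a : ℂ} {δ : ℝ} (hz : ‖z‖ < 1)
    (hδ : 0 ≤ δ) (ha : ‖a‖ + δ ≤ 1) :
    ∫ w in ball a δ, ((1 - z * conj w) ^ 2)⁻¹ = π * (δ : ℂ) ^ 2 * ((1 - z * conj a) ^ 2)⁻¹ := by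
  have hne : ∀ w ∈ closedBall a δ, 1 - conj z * w ≠ 0 := by
    intro w hw
    rw [mem_closedBall, dist_eq_norm] at hw
    exact one_sub_mul_ne_zero (by rwa [Complex.norm_conj])
      (by linarith [norm_le_norm_add_norm_sub' w a])
  have hdiff : DiffContOnCl ℂ (fun w ↦ ((1 - conj z * w) ^ 2)⁻¹) (ball a δ) := by
    refine DifferentiableOn.diffContOnCl fun w hw ↦ ?_
    have := hne w (closure_ball_subset_closedBall hw)
    fun_prop (disch := exact pow_ne_zero 2 this)
  have hconj (w : ℂ) : ((1 - z * conj w) ^ 2)⁻¹ = conj (((1 - conj z * w) ^ 2)⁻¹) := by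
    simp
  simp_rw [hconj]
  rw [integral_conj, hdiff.setIntegral_ball, Complex.measureReal_ball a hδ]
  simp

theorem ball_prod_ball_subset_bidisc {a₁ a₂ : ℂ} {δ₁ δ₂ : ℝ} (ha₁ : ‖a₁‖ + δ₁ ≤ 1)
    (ha₂ : ‖a₂‖ + δ₂ ≤ 1) : ball a₁ δ₁ ×ˢ ball a₂ δ₂ ⊆ bidisc := fun w hw ↦
  ⟨by simpa using ball_subset_ball' (y := 0) (by simpa [add_comm] using ha₁) hw.1,
    by simpa using ball_subset_ball' (y := 0) (by simpa [add_comm] using ha₂) hw.2⟩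

theorem bergmanBidisc_indicator_ball_prod {a₁ a₂ : ℂ} {δ₁ δ₂ : ℝ} (hδ₁ : 0 ≤ δ₁) (hδ₂ : 0 ≤ δ₂)
    (ha₁ : ‖a₁‖ + δ₁ ≤ 1) (ha₂ : ‖a₂‖ + δ₂ ≤ 1) {z : ℂ × ℂ} (hz : z ∈ bidisc) :
    bergmanBidisc ((ball a₁ δ₁ ×ˢ ball a₂ δ₂).indicator 1) z =
      (δ₁ : ℂ) ^ 2 * (δ₂ : ℂ) ^ 2 / ((1 - z.1 * conj a₁) ^ 2 * (1 - z.2 * conj a₂) ^ 2) := by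
  set S := ball a₁ δ₁ ×ˢ ball a₂ δ₂
  have hS : MeasurableSet S := measurableSet_ball.prod measurableSet_ball
  have hpt (w : ℂ × ℂ) : S.indicator 1 w /
      ((π : ℂ) ^ 2 * (1 - z.1 * conj w.1) ^ 2 * (1 - z.2 * conj w.2) ^ 2) =
      S.indicator (fun w ↦ ((π : ℂ) ^ 2)⁻¹ *
        (((1 - z.1 * conj w.1) ^ 2)⁻¹ * ((1 - z.2 * conj w.2) ^ 2)⁻¹)) w := by
    by_cases hw : w ∈ S
    · simp only [indicator_of_mem hw, Pi.one_apply]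
      field_simp
    · simp [indicator_of_notMem hw]
  rw [bergmanBidisc]
  simp_rw [hpt]
  rw [integral_indicator hS, Measure.restrict_restrict hS,
    inter_eq_self_of_subset_left (ball_prod_ball_subset_bidisc ha₁ ha₂), integral_const_mul,
    Measure.volume_eq_prod, setIntegral_prod_mul (fun w₁ ↦ ((1 - z.1 * conj w₁) ^ 2)⁻¹)
      (fun w₂ ↦ ((1 - z.2 * conj w₂) ^ 2)⁻¹),
    setIntegral_ball_inv_one_sub_mul_conj_sq hz.1 hδ₁ ha₁,
    setIntegral_ball_inv_one_sub_mul_conj_sq hz.2 hδ₂ ha₂]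
  field_simp

theorem lt_norm_bergmanBidisc_indicator_ball_prod {r δ ρ : ℝ} (hδ : 0 < δ) (hr : |r| + δ ≤ 1)
    {z : ℂ × ℂ} (hz : z ∈ bidisc) (hρ : ‖1 - z.1 * r‖ * ‖1 - z.2 * r‖ < ρ) :
    δ ^ 4 / ρ ^ 2 < ‖bergmanBidisc ((ball (r : ℂ) δ ×ˢ ball (r : ℂ) δ).indicator 1) z‖ := by
  have hr' : ‖(r : ℂ)‖ + δ ≤ 1 := by rwa [Complex.norm_real, Real.norm_eq_abs]
  have hr₁ : ‖(r : ℂ)‖ ≤ 1 := by linarith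
  have hpos : 0 < ‖1 - z.1 * r‖ * ‖1 - z.2 * r‖ :=
    mul_pos (norm_pos_iff.mpr (one_sub_mul_ne_zero hz.1 hr₁))
      (norm_pos_iff.mpr (one_sub_mul_ne_zero hz.2 hr₁))
  rw [bergmanBidisc_indicator_ball_prod hδ.le hδ.le hr' hr' hz]
  simp only [conj_ofReal, norm_div, norm_mul, norm_pow, Complex.norm_real, Real.norm_eq_abs,
    ← mul_pow, abs_of_pos hδ]
  calc δ ^ 4 / ρ ^ 2 = (δ * δ) ^ 2 / ρ ^ 2 := by ring
    _ < _ := by gcongr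

def boundaryBox (s : ℝ) : Set ℂ := Ioo (1 - s) (1 - s / 2) ×ℂ Ioo (-(s / 2)) (s / 2)

theorem measurableSet_boundaryBox (s : ℝ) : MeasurableSet (boundaryBox s) :=
  (measurableSet_Ioo.prod measurableSet_Ioo).preimage measurableEquivRealProd.measurable

theorem volume_boundaryBox {s : ℝ} (hs : 0 ≤ s) :
    volume (boundaryBox s) = ENNReal.ofReal (s ^ 2 / 2) := by
  rw [boundaryBox, Complex.volume_reProdIm, Real.volume_Ioo, Real.volume_Ioo,
    ← ENNReal.ofReal_mul (by linarith)]
  ring_nf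

theorem norm_lt_one_of_mem_boundaryBox {s : ℝ} (hs : s ≤ 1) {z : ℂ} (hz : z ∈ boundaryBox s) :
    ‖z‖ < 1 := by
  obtain ⟨⟨hre₁, hre₂⟩, him₁, him₂⟩ := hz
  have : ‖z‖ ^ 2 < 1 := by
    rw [Complex.sq_norm, Complex.normSq_apply]
    nlinarith
  nlinarith [norm_nonneg z]

theorem disjoint_boundaryBox {s t : ℝ} (h : 2 * s ≤ t) :
    Disjoint (boundaryBox s) (boundaryBox t) :=
  disjoint_left.mpr fun _ hs ht ↦ by linarith [hs.1.1, ht.1.2]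

theorem norm_one_sub_mul_lt_of_mem_boundaryBox {ε s : ℝ} (hε : 0 < ε) (hεs : ε ≤ s)
    (hs : s ≤ 1) {z : ℂ} (hz : z ∈ boundaryBox s) : ‖1 - z * (1 - ε : ℝ)‖ < 3 * s := by
  have hz₁ := norm_lt_one_of_mem_boundaryBox hs hz
  obtain ⟨⟨hre₁, hre₂⟩, him₁, him₂⟩ := hz
  calc ‖1 - z * (1 - ε : ℝ)‖ = ‖(1 - z) + ε * z‖ := by
        push_cast; ring_nf
    _ ≤ |1 - z.re| + |z.im| + ε * ‖z‖ := by
        grw [norm_add_le, Complex.norm_le_abs_re_add_abs_im]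
        simp [abs_of_pos hε]
    _ < 3 * s := by
        have him : |z.im| < s / 2 := abs_lt.mpr ⟨him₁, him₂⟩
        rw [abs_of_pos (by linarith)]
        nlinarith

theorem le_volume_setOf_norm_one_sub_mul_lt {K : ℕ} {ε : ℝ} (hε : 2 ^ K * ε = 1) :
    ENNReal.ofReal ((K + 1) * (ε ^ 2 / 4)) ≤
      volume {z ∈ bidisc | ‖1 - z.1 * (1 - ε : ℝ)‖ * ‖1 - z.2 * (1 - ε : ℝ)‖ < 9 * ε} := by
  have hε₀ : 0 < ε := pos_of_mul_pos_right (hε ▸ one_pos) (by positivity)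
  have hside {k : ℕ} (hk : k ≤ K) : ε ≤ 2 ^ k * ε ∧ 2 ^ k * ε ≤ 1 :=
    ⟨le_mul_of_one_le_left hε₀.le (one_le_pow₀ one_le_two),
      hε ▸ mul_le_mul_of_nonneg_right (pow_le_pow_right₀ one_le_two hk) hε₀.le⟩
  have hprod {k : ℕ} (hk : k ≤ K) : 2 ^ k * ε * (2 ^ (K - k) * ε) = ε := by
    have h2 : (2 : ℝ) ^ k * 2 ^ (K - k) = 2 ^ K := by rw [← pow_add, Nat.add_sub_cancel' hk]
    linear_combination ε ^ 2 * h2 + ε * hε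
  let T (k : ℕ) : Set (ℂ × ℂ) := boundaryBox (2 ^ k * ε) ×ˢ boundaryBox (2 ^ (K - k) * ε)
  have hT_sub : ∀ k ∈ Finset.range (K + 1), T k ⊆
      {z ∈ bidisc | ‖1 - z.1 * (1 - ε : ℝ)‖ * ‖1 - z.2 * (1 - ε : ℝ)‖ < 9 * ε} := by
    intro k hk z ⟨hz₁, hz₂⟩
    have hk : k ≤ K := Nat.lt_succ_iff.mp (Finset.mem_range.mp hk)
    obtain ⟨hs₁, hs₂⟩ := hside hk
    obtain ⟨ht₁, ht₂⟩ := hside (Nat.sub_le K k)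
    refine ⟨⟨norm_lt_one_of_mem_boundaryBox hs₂ hz₁, norm_lt_one_of_mem_boundaryBox ht₂ hz₂⟩, ?_⟩
    calc ‖1 - z.1 * (1 - ε : ℝ)‖ * ‖1 - z.2 * (1 - ε : ℝ)‖
        < 3 * (2 ^ k * ε) * (3 * (2 ^ (K - k) * ε)) :=
          mul_lt_mul'' (norm_one_sub_mul_lt_of_mem_boundaryBox hε₀ hs₁ hs₂ hz₁)
            (norm_one_sub_mul_lt_of_mem_boundaryBox hε₀ ht₁ ht₂ hz₂) (norm_nonneg _)
            (norm_nonneg _)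
      _ = 9 * ε := by linear_combination 9 * hprod hk
  have hT_vol : ∀ k ∈ Finset.range (K + 1), volume (T k) = ENNReal.ofReal (ε ^ 2 / 4) := by
    intro k hk
    have hk : k ≤ K := Nat.lt_succ_iff.mp (Finset.mem_range.mp hk)
    rw [Measure.volume_eq_prod, Measure.prod_prod, volume_boundaryBox (by positivity),
      volume_boundaryBox (by positivity), ← ENNReal.ofReal_mul (by positivity)]
    congr 1
    linear_combination (2 ^ k * ε * (2 ^ (K - k) * ε) + ε) / 4 * hprod hk
  have hT_disj : (Finset.range (K + 1) : Set ℕ).PairwiseDisjoint T := by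
    have hdisj {i j : ℕ} (h : i < j) :
        Disjoint (boundaryBox (2 ^ i * ε)) (boundaryBox (2 ^ j * ε)) :=
      disjoint_boundaryBox <| by
        rw [← mul_assoc, ← pow_succ']
        exact mul_le_mul_of_nonneg_right (pow_le_pow_right₀ one_le_two h) hε₀.le
    intro i _ j _ hij
    rcases hij.lt_or_gt with h | h
    · exact disjoint_prod.mpr (Or.inl (hdisj h))
    · exact disjoint_prod.mpr (Or.inl (hdisj h).symm)
  calc ENNReal.ofReal ((K + 1) * (ε ^ 2 / 4))
        = ∑ k ∈ Finset.range (K + 1), volume (T k) := by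
        rw [Finset.sum_congr rfl hT_vol, Finset.sum_const, Finset.card_range, nsmul_eq_mul,
          ENNReal.ofReal_mul (by positivity)]
        norm_cast
    _ = volume (⋃ k ∈ Finset.range (K + 1), T k) :=
        (measure_biUnion_finset hT_disj fun k _ ↦
          (measurableSet_boundaryBox _).prod (measurableSet_boundaryBox _)).symm
    _ ≤ _ := measure_mono (iUnion₂_subset hT_sub)

/-- The Bergman projection on the bidisc is not of weak-type (1,1). -/
theorem bergmanBidisc_not_weak_type_one_one :
    ¬ ∃ C : ℝ, 0 < C ∧ ∀ f : ℂ × ℂ → ℂ, IntegrableOn f bidisc volume →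
      ∀ lam : ℝ, 0 < lam →
        volume {z ∈ bidisc | lam < ‖bergmanBidisc f z‖} ≤
          ENNReal.ofReal (C * (∫ w in bidisc, ‖f w‖) / lam) := by
  rintro ⟨C, hC, hweak⟩
  obtain ⟨K, hK⟩ := exists_nat_gt (324 * C * π ^ 2)
  set ε : ℝ := ((2 : ℝ) ^ K)⁻¹
  have hε : 2 ^ K * ε = 1 := mul_inv_cancel₀ (by positivity)
  have hε₀ : 0 < ε := by positivity
  have hε₁ : ε ≤ 1 := inv_le_one_of_one_le₀ (one_le_pow₀ one_le_two)
  have hr : |1 - ε| + ε / 2 ≤ 1 := by rw [abs_of_nonneg (by linarith)]; linarith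
  have hr' : ‖((1 - ε : ℝ) : ℂ)‖ + ε / 2 ≤ 1 := by rwa [Complex.norm_real, Real.norm_eq_abs]
  set S := ball ((1 - ε : ℝ) : ℂ) (ε / 2) ×ˢ ball ((1 - ε : ℝ) : ℂ) (ε / 2)
  have hS : MeasurableSet S := measurableSet_ball.prod measurableSet_ball
  have hf : IntegrableOn (S.indicator 1) bidisc :=
    (integrable_indicator_iff hS).mpr
      (integrableOn_const (C := (1 : ℂ)) (isBounded_ball.prod isBounded_ball).measure_lt_top.ne)
  have hlevel : {z ∈ bidisc | ‖1 - z.1 * (1 - ε : ℝ)‖ * ‖1 - z.2 * (1 - ε : ℝ)‖ < 9 * ε} ⊆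
      {z ∈ bidisc | (ε / 2) ^ 4 / (9 * ε) ^ 2 < ‖bergmanBidisc (S.indicator 1) z‖} :=
    fun z hz ↦ ⟨hz.1, lt_norm_bergmanBidisc_indicator_ball_prod (by positivity) hr hz.1 hz.2⟩
  have hvol := (le_volume_setOf_norm_one_sub_mul_lt hε).trans
    ((measure_mono hlevel).trans (hweak _ hf _ (by positivity)))
  rw [setIntegral_norm_indicator_one_of_subset hS (ball_prod_ball_subset_bidisc hr' hr'),
    Measure.volume_eq_prod, measureReal_prod_prod, Complex.measureReal_ball _ (by positivity),
    ENNReal.ofReal_le_ofReal_iff (by positivity)] at hvol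
  have hbound : (K + 1) * (ε ^ 2 / 4) ≤ 81 * C * π ^ 2 * ε ^ 2 := by
    convert hvol using 1
    field_simp
    ring
  nlinarith
end
end

section
/- For 0 < s < 1 define f_s on 𝔻² by f_s(w₁,w₂) = (1-s²)⁴ |1 - s w₁|⁻⁴ |1 - s w₂|⁻⁴. Then ‖f_s‖_{L¹(𝔻²)} = π², and for every (z₁,z₂) ∈ 𝔻² one has P f_s(z₁,z₂) = (1 - s z₁)⁻² (1 - s z₂)⁻². -/
/-!
Both integrals split by Fubini into one-variable integrals over the disc of the weight
`(1 - s²)² / |1 - s w|⁴`, which is the Jacobian of the disc involution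
`φ(w) = (s - w) / (1 - s w)`. Changing variables by `φ` turns the norm integral into the area `π`
of the disc, and turns the projection integral into `∫ F(conj u) du / π` for a function `F`
holomorphic on the closed disc; by the area mean value property this is `F(0) = (1 - s z)⁻²`.
-/

open MeasureTheory Complex Set

noncomputable section

open Metric Real ComplexConjugate

section BallIntegrals

variable {E : Type*} [NormedAddCommGroup E]

theorem Complex.polarCoord_symm_eq_circleMap (p : ℝ × ℝ) :
    Complex.polarCoord.symm p = circleMap 0 p.1 p.2 := by
  simp [circleMap, Complex.exp_mul_I, ← Complex.ofReal_cos, ← Complex.ofReal_sin]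

theorem Complex.polarCoord_target_inter_preimage_ball (R : ℝ) :
    polarCoord.target ∩ Complex.polarCoord.symm ⁻¹' ball 0 R = Ioo 0 R ×ˢ Ioo (-π) π := by
  ext ⟨r, θ⟩
  simp only [polarCoord_target, mem_inter_iff, mem_prod, mem_Ioi, mem_Ioo, mem_preimage,
    mem_ball_zero_iff, Complex.norm_polarCoord_symm]
  constructor
  · rintro ⟨⟨hr, hθ⟩, hrR⟩
    exact ⟨⟨hr, by rwa [abs_of_pos hr] at hrR⟩, hθ⟩
  · rintro ⟨⟨hr, hrR⟩, hθ⟩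
    exact ⟨⟨hr, hθ⟩, by rwa [abs_of_pos hr]⟩

theorem setIntegral_Ioo_neg_pi_pi_circleMap [NormedSpace ℝ E] (f : ℂ → E) (r : ℝ) :
    ∫ θ in Ioo (-π) π, f (circleMap 0 r θ) = (2 * π) • circleAverage f 0 r := by
  rw [circleAverage_eq_integral_add (-π), smul_inv_smul₀ (by positivity),
    intervalIntegral.integral_comp_add_right (fun θ ↦ f (circleMap 0 r θ)),
    intervalIntegral.integral_of_le (by linarith [pi_pos]), integral_Ioc_eq_integral_Ioo]
  simp only [zero_add, show 2 * π + -π = π by ring]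

theorem setIntegral_ball_zero_eq_integral_circleAverage [NormedSpace ℝ E] {f : ℂ → E} {R : ℝ}
    (hf : ContinuousOn f (closedBall 0 R)) :
    ∫ z in ball (0 : ℂ) R, f z = ∫ r in Ioo 0 R, (2 * π * r) • circleAverage f 0 r := by
  have hsymm : Continuous Complex.polarCoord.symm := by
    rw [funext Complex.polarCoord_symm_apply]; fun_prop
  have hpolar : IntegrableOn (fun p : ℝ × ℝ ↦ p.1 • f (Complex.polarCoord.symm p))
      (Ioo 0 R ×ˢ Ioo (-π) π) := by
    refine (ContinuousOn.integrableOn_compact (isCompact_Icc.prod isCompact_Icc) ?_).mono_set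
      (prod_mono Ioo_subset_Icc_self Ioo_subset_Icc_self)
    refine continuousOn_fst.smul (hf.comp hsymm.continuousOn fun p hp ↦ ?_)
    simpa [abs_of_nonneg hp.1.1] using hp.1.2
  calc ∫ z in ball (0 : ℂ) R, f z
      = ∫ p in polarCoord.target ∩ Complex.polarCoord.symm ⁻¹' ball 0 R,
          p.1 • f (Complex.polarCoord.symm p) := by
        rw [← integral_indicator measurableSet_ball, ← Complex.integral_comp_polarCoord_symm,
          ← setIntegral_indicator (hsymm.measurable measurableSet_ball)]
        congr with p
        rw [indicator_smul_apply]
        rfl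
    _ = ∫ r in Ioo 0 R, ∫ θ in Ioo (-π) π, r • f (circleMap 0 r θ) := by
        rw [polarCoord_target_inter_preimage_ball, Measure.volume_eq_prod,
          setIntegral_prod _ hpolar]
        simp only [polarCoord_symm_eq_circleMap]
    _ = ∫ r in Ioo 0 R, (2 * π * r) • circleAverage f 0 r := by
        simp only [integral_smul, setIntegral_Ioo_neg_pi_pi_circleMap, smul_smul, mul_comm]

theorem DiffContOnCl.setIntegral_ball_zero_s1 [NormedSpace ℂ E] [CompleteSpace E] {f : ℂ → E}
    {R : ℝ} (hf : DiffContOnCl ℂ f (ball 0 R)) (hR : 0 < R) :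
    ∫ z in ball (0 : ℂ) R, f z = (π * R ^ 2) • f 0 := by
  have hcont : ContinuousOn f (closedBall 0 R) := closure_ball (0 : ℂ) hR.ne' ▸ hf.2
  have hmean : ∀ r ∈ Ioo 0 R, Real.circleAverage f 0 r = f 0 := fun r hr ↦
    DiffContOnCl.circleAverage (R := r) <| hf.1.diffContOnCl_ball <| by
      simpa [abs_of_pos hr.1] using closedBall_subset_ball hr.2
  have harea : ∫ r in Ioo 0 R, 2 * π * r = π * R ^ 2 := by
    rw [← integral_Ioc_eq_integral_Ioo, ← intervalIntegral.integral_of_le hR.le,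
      intervalIntegral.integral_const_mul, integral_id]
    ring
  rw [setIntegral_ball_zero_eq_integral_circleAverage hcont,
    setIntegral_congr_fun measurableSet_Ioo fun r hr ↦ by rw [hmean r hr],
    integral_smul_const, harea]

theorem setIntegral_ball_zero_comp_conj [NormedSpace ℝ E] (f : ℂ → E) (r : ℝ) :
    ∫ u in ball (0 : ℂ) r, f (conj u) = ∫ u in ball (0 : ℂ) r, f u := by
  have hpre : conjLIE ⁻¹' ball (0 : ℂ) r = ball 0 r := by ext; simp
  simpa [hpre] using conjLIE.measurePreserving.setIntegral_preimage_emb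
    conjLIE.toHomeomorph.measurableEmbedding f (ball 0 r)

end BallIntegrals

theorem ContinuousLinearMap.det_restrictScalars_smulRight_one (d : ℂ) :
    (((1 : ℂ →L[ℂ] ℂ).smulRight d).restrictScalars ℝ).det = normSq d := by
  rw [ContinuousLinearMap.det, ContinuousLinearMap.coe_restrictScalars,
    LinearMap.det_restrictScalars, Algebra.norm_complex_apply]
  simp

section MobiusInvolution

variable {a w : ℂ}

def mobiusInvolution (a w : ℂ) : ℂ := (a - w) / (1 - conj a * w)

/-- `|φ_a'(w)|²`, the real Jacobian of `φ_a = mobiusInvolution a`. -/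
def mobiusJacobian (a w : ℂ) : ℝ := (1 - ‖a‖ ^ 2) ^ 2 * (‖1 - conj a * w‖ ^ 4)⁻¹

theorem normSq_one_sub_conj_mul_sub_normSq_sub (a w : ℂ) :
    normSq (1 - conj a * w) - normSq (a - w) = (1 - normSq a) * (1 - normSq w) := by
  simp only [normSq_apply, sub_re, sub_im, mul_re, mul_im, conj_re, conj_im, one_re, one_im]
  ring

theorem one_sub_conj_mul_ne_zero (ha : ‖a‖ < 1) (hw : ‖w‖ ≤ 1) : 1 - conj a * w ≠ 0 := by
  refine sub_ne_zero.2 fun h ↦ ?_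
  have : ‖conj a * w‖ < 1 := by
    rw [norm_mul, norm_conj]
    nlinarith [norm_nonneg a, norm_nonneg w]
  simp [← h] at this

theorem norm_sub_lt_norm_one_sub_conj_mul (ha : ‖a‖ < 1) (hw : ‖w‖ < 1) :
    ‖a - w‖ < ‖1 - conj a * w‖ := by
  have key := normSq_one_sub_conj_mul_sub_normSq_sub a w
  rw [normSq_eq_norm_sq, normSq_eq_norm_sq, normSq_eq_norm_sq, normSq_eq_norm_sq] at key
  have : 0 < (1 - ‖a‖ ^ 2) * (1 - ‖w‖ ^ 2) := by
    apply mul_pos <;> nlinarith [norm_nonneg a, norm_nonneg w]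
  exact pow_lt_pow_iff_left₀ (norm_nonneg _) (norm_nonneg _) two_ne_zero |>.1 (by linarith)

theorem norm_mobiusInvolution_lt_one (ha : ‖a‖ < 1) (hw : ‖w‖ < 1) :
    ‖mobiusInvolution a w‖ < 1 := by
  rw [mobiusInvolution, norm_div, div_lt_one (norm_pos_iff.2 (one_sub_conj_mul_ne_zero ha hw.le))]
  exact norm_sub_lt_norm_one_sub_conj_mul ha hw

theorem mobiusInvolution_mobiusInvolution (ha : ‖a‖ < 1) (hw : ‖w‖ < 1) :
    mobiusInvolution a (mobiusInvolution a w) = w := by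
  have hw' := one_sub_conj_mul_ne_zero ha hw.le
  have ha' := one_sub_conj_mul_ne_zero ha ha.le
  have hnum : a - mobiusInvolution a w = w * (1 - conj a * a) / (1 - conj a * w) := by
    rw [eq_div_iff hw', mobiusInvolution, sub_mul, div_mul_cancel₀ _ hw']
    ring
  have hden : 1 - conj a * mobiusInvolution a w = (1 - conj a * a) / (1 - conj a * w) := by
    rw [eq_div_iff hw', mobiusInvolution, sub_mul, mul_assoc, div_mul_cancel₀ _ hw']
    ring
  rw [mobiusInvolution, hnum, hden, mul_div_assoc, mul_div_cancel_right₀ _ (div_ne_zero ha' hw')]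

theorem hasDerivAt_mobiusInvolution (hw : 1 - conj a * w ≠ 0) :
    HasDerivAt (mobiusInvolution a) ((conj a * a - 1) / (1 - conj a * w) ^ 2) w := by
  have hnum : HasDerivAt (fun x ↦ a - x) (-1) w := (hasDerivAt_id w).const_sub a
  have hden : HasDerivAt (fun x ↦ 1 - conj a * x) (-conj a) w := by
    simpa using ((hasDerivAt_id w).const_mul (conj a)).const_sub 1
  exact (hnum.div hden hw).congr_deriv (by ring)

theorem mobiusInvolution_image_ball (ha : ‖a‖ < 1) :
    mobiusInvolution a '' ball 0 1 = ball 0 1 := by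
  refine (image_subset_iff.2 fun w hw ↦ ?_).antisymm fun w hw ↦ ⟨mobiusInvolution a w, ?_, ?_⟩
  · simpa using norm_mobiusInvolution_lt_one ha (mem_ball_zero_iff.1 hw)
  · simpa using norm_mobiusInvolution_lt_one ha (mem_ball_zero_iff.1 hw)
  · exact mobiusInvolution_mobiusInvolution ha (mem_ball_zero_iff.1 hw)

theorem injOn_mobiusInvolution (ha : ‖a‖ < 1) : InjOn (mobiusInvolution a) (ball 0 1) :=
  fun u hu v hv huv ↦ by
    simpa [mobiusInvolution_mobiusInvolution ha (mem_ball_zero_iff.1 hu),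
      mobiusInvolution_mobiusInvolution ha (mem_ball_zero_iff.1 hv)] using
      congrArg (mobiusInvolution a) huv

theorem setIntegral_ball_comp_mobiusInvolution {E : Type*} [NormedAddCommGroup E]
    [NormedSpace ℝ E] (ha : ‖a‖ < 1) (h : ℂ → E) :
    ∫ u in ball (0 : ℂ) 1, h (mobiusInvolution a u)
      = ∫ w in ball (0 : ℂ) 1, mobiusJacobian a w • h w := by
  have hderiv : ∀ w ∈ ball (0 : ℂ) 1, HasFDerivWithinAt (mobiusInvolution a)
      (((1 : ℂ →L[ℂ] ℂ).smulRight ((conj a * a - 1) / (1 - conj a * w) ^ 2)).restrictScalars ℝ)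
      (ball 0 1) w := fun w hw ↦
    ((hasDerivAt_mobiusInvolution (one_sub_conj_mul_ne_zero ha
      (mem_ball_zero_iff.1 hw).le)).hasFDerivAt.restrictScalars ℝ).hasFDerivWithinAt
  have := integral_image_eq_integral_abs_det_fderiv_smul volume measurableSet_ball hderiv
    (injOn_mobiusInvolution ha) fun u ↦ h (mobiusInvolution a u)
  rw [mobiusInvolution_image_ball ha] at this
  rw [this]
  refine setIntegral_congr_fun measurableSet_ball fun w hw ↦ ?_
  have hnorm : ‖conj a * a - 1‖ = 1 - ‖a‖ ^ 2 := by
    rw [← norm_neg, neg_sub, conj_mul', ← ofReal_pow, ← ofReal_one, ← ofReal_sub, norm_real,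
      Real.norm_of_nonneg (by nlinarith [norm_nonneg a])]
  rw [ContinuousLinearMap.det_restrictScalars_smulRight_one, normSq_eq_norm_sq, norm_div,
    norm_pow, hnorm, mobiusInvolution_mobiusInvolution ha (mem_ball_zero_iff.1 hw),
    abs_of_nonneg (by positivity)]
  rw [mobiusJacobian]
  congr 1
  ring

end MobiusInvolution

section BergmanKernel

variable {a z : ℂ}

theorem setIntegral_ball_mobiusJacobian (ha : ‖a‖ < 1) :
    ∫ w in ball (0 : ℂ) 1, mobiusJacobian a w = π := by
  have := setIntegral_ball_comp_mobiusInvolution ha fun _ ↦ (1 : ℝ)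
  simp only [smul_eq_mul, mul_one] at this
  rw [← this, setIntegral_const, smul_eq_mul, mul_one, measureReal_def, Complex.volume_ball]
  simp

theorem one_sub_mul_conj_add_mul_sub_ne_zero (ha : ‖a‖ < 1) (hz : ‖z‖ < 1) {v : ℂ}
    (hv : ‖v‖ ≤ 1) : 1 - z * conj a + v * (z - a) ≠ 0 := fun h ↦ by
  have : ‖1 - conj a * z‖ ≤ ‖a - z‖ := by
    rw [show 1 - conj a * z = -(v * (z - a)) by linear_combination h, norm_neg, norm_mul,
      norm_sub_rev]
    exact mul_le_of_le_one_left (norm_nonneg _) hv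
  linarith [norm_sub_lt_norm_one_sub_conj_mul ha hz]

theorem one_sub_mul_conj_mobiusInvolution (ha : ‖a‖ < 1) {u : ℂ} (hu : ‖u‖ < 1) :
    1 - z * conj (mobiusInvolution a u)
      = (1 - z * conj a + conj u * (z - a)) / (1 - a * conj u) := by
  have hD : 1 - conj (conj a) * conj u ≠ 0 :=
    one_sub_conj_mul_ne_zero (by rwa [norm_conj]) (by rw [norm_conj]; exact hu.le)
  rw [conj_conj] at hD
  rw [eq_div_iff hD, mobiusInvolution, map_div₀]
  simp only [map_sub, map_one, map_mul, conj_conj]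
  rw [sub_mul, mul_assoc, div_mul_cancel₀ _ hD]
  ring

/-- The Bergman projection of `mobiusJacobian a` on the disc, evaluated at `z`. -/
theorem setIntegral_ball_mobiusJacobian_div_bergmanKernel (ha : ‖a‖ < 1) (hz : ‖z‖ < 1) :
    ∫ u in ball (0 : ℂ) 1, (mobiusJacobian a u : ℂ) / (π * (1 - z * conj u) ^ 2)
      = ((1 - conj a * z) ^ 2)⁻¹ := by
  set F : ℂ → ℂ := fun v ↦ (1 - a * v) ^ 2 * ((1 - z * conj a + v * (z - a)) ^ 2)⁻¹
  have hF : DiffContOnCl ℂ F (ball 0 1) := by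
    refine DifferentiableOn.diffContOnCl_ball (U := closedBall 0 1) ?_ subset_rfl
    exact ((differentiableOn_const _).sub (differentiableOn_id.const_mul a)).pow 2 |>.mul
      (((differentiableOn_const _).add (differentiableOn_id.mul_const _)).pow 2 |>.inv
        fun v hv ↦ pow_ne_zero 2 <| one_sub_mul_conj_add_mul_sub_ne_zero ha hz <|
          mem_closedBall_zero_iff.1 hv)
  have hcomp : ∀ u ∈ ball (0 : ℂ) 1,
      ((1 - z * conj (mobiusInvolution a u)) ^ 2)⁻¹ = F (conj u) := fun u hu ↦ by
    rw [one_sub_mul_conj_mobiusInvolution ha (mem_ball_zero_iff.1 hu), div_pow, inv_div,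
      div_eq_mul_inv]
  calc ∫ u in ball (0 : ℂ) 1, (mobiusJacobian a u : ℂ) / (π * (1 - z * conj u) ^ 2)
      = (π : ℂ)⁻¹ * ∫ u in ball (0 : ℂ) 1, mobiusJacobian a u • ((1 - z * conj u) ^ 2)⁻¹ := by
        rw [← integral_const_mul]
        congr 1 with u
        rw [real_smul, div_eq_mul_inv, mul_inv]
        ring
    _ = (π : ℂ)⁻¹ * ∫ u in ball (0 : ℂ) 1, F (conj u) := by
        rw [← setIntegral_ball_comp_mobiusInvolution ha,
          setIntegral_congr_fun measurableSet_ball hcomp]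
    _ = ((1 - conj a * z) ^ 2)⁻¹ := by
        rw [setIntegral_ball_zero_comp_conj, hF.setIntegral_ball_zero_s1 one_pos]
        simp [F, mul_comm z]

end BergmanKernel

theorem setIntegral_bidisc_mul {𝕜 : Type*} [RCLike 𝕜] (f g : ℂ → 𝕜) :
    ∫ w in bidisc, f w.1 * g w.2 = (∫ u in ball (0 : ℂ) 1, f u) * ∫ u in ball (0 : ℂ) 1, g u := by
  have : bidisc = ball (0 : ℂ) 1 ×ˢ ball (0 : ℂ) 1 := by ext; simp [bidisc]
  rw [this, Measure.volume_eq_prod, setIntegral_prod_mul]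

theorem mobiusJacobian_ofReal (s : ℝ) (w : ℂ) :
    mobiusJacobian s w = (1 - s ^ 2) ^ 2 * (‖1 - (s : ℂ) * w‖ ^ 4)⁻¹ := by
  simp [mobiusJacobian]

/-- For `0 < s < 1`, the function
`f_s(w₁,w₂) = (1-s²)⁴ |1 - s w₁|⁻⁴ |1 - s w₂|⁻⁴` has `‖f_s‖_{L¹(𝔻²)} = π²`, and
`P f_s (z₁, z₂) = (1 - s z₁)⁻² (1 - s z₂)⁻²` on the bidisc. -/
theorem bergmanBidisc_of_test_function (s : ℝ) (hs0 : 0 < s) (hs1 : s < 1) :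
    (∫ w in bidisc,
        (1 - s ^ 2) ^ 4 * (‖1 - (s : ℂ) * w.1‖ ^ 4)⁻¹ *
          (‖1 - (s : ℂ) * w.2‖ ^ 4)⁻¹) = Real.pi ^ 2 ∧
    ∀ z ∈ bidisc,
      bergmanBidisc
          (fun w => (((1 - s ^ 2) ^ 4 * (‖1 - (s : ℂ) * w.1‖ ^ 4)⁻¹ *
            (‖1 - (s : ℂ) * w.2‖ ^ 4)⁻¹ : ℝ) : ℂ)) z =
        ((1 - (s : ℂ) * z.1) ^ 2)⁻¹ * ((1 - (s : ℂ) * z.2) ^ 2)⁻¹ := by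
  have hs : ‖(s : ℂ)‖ < 1 := by rwa [norm_real, Real.norm_of_nonneg hs0.le]
  have hfactor (w : ℂ × ℂ) : (1 - s ^ 2) ^ 4 * (‖1 - (s : ℂ) * w.1‖ ^ 4)⁻¹ *
      (‖1 - (s : ℂ) * w.2‖ ^ 4)⁻¹ = mobiusJacobian s w.1 * mobiusJacobian s w.2 := by
    rw [mobiusJacobian_ofReal, mobiusJacobian_ofReal]
    ring
  refine ⟨?_, fun z hz ↦ ?_⟩
  · simp only [hfactor]
    rw [setIntegral_bidisc_mul, setIntegral_ball_mobiusJacobian hs, sq]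
  · calc bergmanBidisc _ z
        = (∫ u in ball (0 : ℂ) 1, (mobiusJacobian s u : ℂ) / (π * (1 - z.1 * conj u) ^ 2)) *
            ∫ u in ball (0 : ℂ) 1, (mobiusJacobian s u : ℂ) / (π * (1 - z.2 * conj u) ^ 2) := by
          rw [← setIntegral_bidisc_mul, bergmanBidisc]
          congr 1 with w
          rw [hfactor, ofReal_mul, div_mul_div_comm]
          ring
      _ = ((1 - (s : ℂ) * z.1) ^ 2)⁻¹ * ((1 - (s : ℂ) * z.2) ^ 2)⁻¹ := by
          rw [setIntegral_ball_mobiusJacobian_div_bergmanKernel hs hz.1,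
            setIntegral_ball_mobiusJacobian_div_bergmanKernel hs hz.2, conj_ofReal]
end
end

section
/- There is an absolute constant c > 0 such that for every s ∈ (0,1), setting λ = (1-s)⁻²/16, the set {(z₁,z₂) ∈ 𝔻² : |1 - s z₁|⁻² |1 - s z₂|⁻² > λ} has Lebesgue measure at least c λ⁻¹ log(1/(1-s²)). -/
open MeasureTheory Complex Set

noncomputable section

open Function

def boxNearOne (δ : ℝ) : Set ℂ :=
  {z | z.re ∈ Ioo (1 - δ / 2) (1 - δ / 4) ∧ z.im ∈ Ioo 0 (δ / 4)}

def boxPair (t δ : ℝ) : Set (ℂ × ℂ) := boxNearOne δ ×ˢ boxNearOne (t / δ)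

def bidiscSuperlevelSet (s : ℝ) : Set (ℂ × ℂ) :=
  {z ∈ bidisc | ((1 - s) ^ 2)⁻¹ / 16 < (‖1 - (s : ℂ) * z.1‖ ^ 2)⁻¹ * (‖1 - (s : ℂ) * z.2‖ ^ 2)⁻¹}

lemma boxNearOne_eq_preimage (δ : ℝ) :
    boxNearOne δ = measurableEquivRealProd ⁻¹' (Ioo (1 - δ / 2) (1 - δ / 4) ×ˢ Ioo 0 (δ / 4)) := by
  ext z
  simp [boxNearOne, measurableEquivRealProd]

lemma measurableSet_boxNearOne (δ : ℝ) : MeasurableSet (boxNearOne δ) := by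
  rw [boxNearOne_eq_preimage]
  exact measurableEquivRealProd.measurable (measurableSet_Ioo.prod measurableSet_Ioo)

lemma volume_boxNearOne {δ : ℝ} (hδ : 0 ≤ δ) :
    volume (boxNearOne δ) = ENNReal.ofReal (δ ^ 2 / 16) := by
  rw [boxNearOne_eq_preimage, volume_preserving_equiv_real_prod.measure_preimage
    (measurableSet_Ioo.prod measurableSet_Ioo).nullMeasurableSet, Measure.volume_eq_prod,
    Measure.prod_prod, Real.volume_Ioo, Real.volume_Ioo, ← ENNReal.ofReal_mul (by linarith)]
  congr 1
  ring

lemma norm_lt_one_of_mem_boxNearOne {δ : ℝ} (hδ : δ ≤ 2) {z : ℂ} (hz : z ∈ boxNearOne δ) :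
    ‖z‖ < 1 := by
  obtain ⟨⟨hre₁, hre₂⟩, him₁, him₂⟩ := hz
  have hnorm : ‖z‖ ^ 2 = z.re ^ 2 + z.im ^ 2 := by rw [Complex.sq_norm, normSq_apply]; ring
  nlinarith [norm_nonneg z]

lemma norm_one_sub_mul_mem_Ioo {s δ : ℝ} (hs₀ : 0 ≤ s) (hs₁ : s ≤ 1) (hδ : 1 - s ≤ δ)
    {z : ℂ} (hz : z ∈ boxNearOne δ) : ‖1 - (s : ℂ) * z‖ ∈ Ioo 0 (2 * δ) := by
  obtain ⟨⟨hre₁, hre₂⟩, him₁, him₂⟩ := hz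
  have hre : (1 - (s : ℂ) * z).re = (1 - s) + s * (1 - z.re) := by simp; ring
  have him : (1 - (s : ℂ) * z).im = -(s * z.im) := by simp
  have hsre : s * z.re < 1 := by rcases le_or_gt z.re 0 with h | h <;> nlinarith
  have hre_pos : 0 < (1 - (s : ℂ) * z).re := by rw [hre]; linarith
  have hre_lt : (1 - (s : ℂ) * z).re < 3 * δ / 2 := by rw [hre]; nlinarith
  have him_lt : |(1 - (s : ℂ) * z).im| < δ / 4 := by
    rw [him, abs_neg, abs_of_nonneg (by positivity)]; nlinarith
  refine ⟨hre_pos.trans_le ((le_abs_self _).trans (abs_re_le_norm _)), ?_⟩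
  calc ‖1 - (s : ℂ) * z‖ ≤ |(1 - (s : ℂ) * z).re| + |(1 - (s : ℂ) * z).im| :=
        norm_le_abs_re_add_abs_im _
    _ < 3 * δ / 2 + δ / 4 := by rw [abs_of_pos hre_pos]; gcongr
    _ ≤ 2 * δ := by linarith

lemma disjoint_boxNearOne {δ δ' : ℝ} (h : 2 * δ ≤ δ') :
    Disjoint (boxNearOne δ) (boxNearOne δ') :=
  disjoint_left.2 fun _ hz hz' => by linarith [hz.1.1, hz'.1.2]

lemma measurableSet_boxPair (t δ : ℝ) : MeasurableSet (boxPair t δ) :=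
  (measurableSet_boxNearOne δ).prod (measurableSet_boxNearOne _)

lemma volume_boxPair {t δ : ℝ} (ht : 0 ≤ t) (hδ : 0 < δ) :
    volume (boxPair t δ) = ENNReal.ofReal (t ^ 2 / 256) := by
  rw [boxPair, Measure.volume_eq_prod, Measure.prod_prod, volume_boxNearOne hδ.le,
    volume_boxNearOne (by positivity), ← ENNReal.ofReal_mul (by positivity)]
  congr 1
  field_simp
  ring

lemma boxPair_subset_bidiscSuperlevelSet {s δ : ℝ} (hs : s ≤ 1) (hδ₀ : 1 - s ≤ δ) (hδ₁ : δ ≤ 1) :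
    boxPair (1 - s) δ ⊆ bidiscSuperlevelSet s := by
  rintro z ⟨hz₁, hz₂⟩
  have hs₀ : 0 ≤ s := by linarith
  have hδ : 0 < δ := by linarith [hz₁.2.1, hz₁.2.2]
  have hδ' : (1 - s) / δ ≤ 1 := div_le_one_of_le₀ (by linarith) hδ.le
  have hδ'₀ : 1 - s ≤ (1 - s) / δ := le_div_self (by linarith) hδ hδ₁
  obtain ⟨ha₀, ha⟩ := norm_one_sub_mul_mem_Ioo hs₀ hs hδ₀ hz₁
  obtain ⟨hb₀, hb⟩ := norm_one_sub_mul_mem_Ioo hs₀ hs hδ'₀ hz₂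
  refine ⟨⟨norm_lt_one_of_mem_boxNearOne (by linarith) hz₁,
    norm_lt_one_of_mem_boxNearOne (by linarith) hz₂⟩, ?_⟩
  have hprod : ‖1 - (s : ℂ) * z.1‖ * ‖1 - (s : ℂ) * z.2‖ < 4 * (1 - s) :=
    calc _ < (2 * δ) * (2 * ((1 - s) / δ)) := mul_lt_mul'' ha hb ha₀.le hb₀.le
      _ = 4 * (1 - s) := by field_simp; ring
  calc ((1 - s) ^ 2)⁻¹ / 16 = ((4 * (1 - s)) ^ 2)⁻¹ := by rw [mul_pow, mul_inv]; ring
    _ < ((‖1 - (s : ℂ) * z.1‖ * ‖1 - (s : ℂ) * z.2‖) ^ 2)⁻¹ :=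
        inv_strictAnti₀ (by positivity) (by gcongr)
    _ = _ := by rw [mul_pow, mul_inv]

lemma pairwise_disjoint_boxPair_two_pow_mul {t : ℝ} (ht : 0 < t) :
    Pairwise (Disjoint on fun k : ℕ => boxPair t (2 ^ k * t)) := by
  refine (pairwise_disjoint_on _).2 fun i j hij => ?_
  refine Disjoint.set_prod_left (disjoint_boxNearOne ?_) _ _
  calc 2 * (2 ^ i * t) = 2 ^ (i + 1) * t := by ring
    _ ≤ 2 ^ j * t := by gcongr; norm_num; exact hij

lemma two_pow_mul_le_one_of_le_log {t : ℝ} (ht : 0 < t) {k : ℕ} (hk : (k : ℝ) ≤ Real.log t⁻¹) :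
    2 ^ k * t ≤ 1 := by
  have h2 : (2 : ℝ) ^ k ≤ t⁻¹ :=
    calc (2 : ℝ) ^ k ≤ Real.exp 1 ^ k := by
          gcongr; linarith [Real.add_one_le_exp (1 : ℝ)]
      _ = Real.exp k := by rw [← Real.exp_nat_mul, mul_one]
      _ ≤ t⁻¹ := by rw [← Real.exp_log (inv_pos.2 ht)]; exact Real.exp_le_exp.2 hk
  calc 2 ^ k * t ≤ t⁻¹ * t := by gcongr
    _ = 1 := inv_mul_cancel₀ ht.ne'

lemma natCast_mul_le_measure_of_pairwise_disjoint {α : Type*} [MeasurableSpace α]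
    (μ : Measure α) {P : ℕ → Set α} {S : Set α} {n : ℕ} {m : ENNReal}
    (hd : Pairwise (Disjoint on P)) (hP : ∀ k, MeasurableSet (P k))
    (hm : ∀ k < n, μ (P k) = m) (hS : ∀ k < n, P k ⊆ S) : n * m ≤ μ S :=
  calc (n : ENNReal) * m = ∑ k ∈ Finset.range n, μ (P k) := by
        rw [Finset.sum_congr rfl fun k hk => hm k (Finset.mem_range.1 hk)]
        simp
    _ = μ (⋃ k ∈ Finset.range n, P k) :=
        (measure_biUnion_finset (fun _ _ _ _ h => hd h) fun k _ => hP k).symm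
    _ ≤ μ S := measure_mono (iUnion₂_subset fun k hk => hS k (Finset.mem_range.1 hk))

lemma log_one_div_one_sub_sq_le_log_inv {s : ℝ} (hs₀ : 0 ≤ s) (hs₁ : s < 1) :
    Real.log (1 / (1 - s ^ 2)) ≤ Real.log (1 - s)⁻¹ := by
  rw [one_div]
  exact Real.log_le_log (inv_pos.2 (by nlinarith)) (inv_anti₀ (by linarith) (by nlinarith))

/-- There is an absolute constant `c > 0` such that for every `s ∈ (0,1)`, with
`λ = (1-s)⁻² / 16`, the set `{(z₁,z₂) ∈ 𝔻² : |1 - s z₁|⁻² |1 - s z₂|⁻² > λ}` has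
Lebesgue measure at least `c λ⁻¹ log(1/(1-s²))`. -/
theorem measure_superlevel_set_lower_bound :
    ∃ c : ℝ, 0 < c ∧ ∀ s : ℝ, 0 < s → s < 1 →
      ENNReal.ofReal (c * (((1 - s) ^ 2)⁻¹ / 16)⁻¹ * Real.log (1 / (1 - s ^ 2))) ≤
        volume {z ∈ bidisc |
          ((1 - s) ^ 2)⁻¹ / 16 <
            (‖1 - (s : ℂ) * z.1‖ ^ 2)⁻¹ *
              (‖1 - (s : ℂ) * z.2‖ ^ 2)⁻¹} := by
  refine ⟨1 / 4096, by norm_num, fun s hs₀ hs₁ => ?_⟩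
  have ht : 0 < 1 - s := by linarith
  set K := ⌊Real.log (1 - s)⁻¹⌋₊
  have hlog : 0 ≤ Real.log (1 - s)⁻¹ := Real.log_nonneg ((one_le_inv₀ ht).2 (by linarith))
  have hcount : ((K + 1 : ℕ) : ENNReal) * ENNReal.ofReal ((1 - s) ^ 2 / 256) ≤
      volume (bidiscSuperlevelSet s) := by
    refine natCast_mul_le_measure_of_pairwise_disjoint _ (pairwise_disjoint_boxPair_two_pow_mul ht)
      (fun k => measurableSet_boxPair _ _) (fun k _ => volume_boxPair ht.le (by positivity))
      fun k hk => boxPair_subset_bidiscSuperlevelSet hs₁.le ?_ (two_pow_mul_le_one_of_le_log ht ?_)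
    · exact le_mul_of_one_le_left ht.le (one_le_pow₀ (by norm_num))
    · exact (Nat.le_floor_iff hlog).1 (Nat.lt_succ_iff.1 hk)
  refine le_trans ?_ hcount
  rw [← ENNReal.ofReal_natCast, ← ENNReal.ofReal_mul (by positivity)]
  refine ENNReal.ofReal_le_ofReal ?_
  have hK : Real.log (1 / (1 - s ^ 2)) ≤ (K + 1 : ℕ) := by
    push_cast
    exact (log_one_div_one_sub_sq_le_log_inv hs₀.le hs₁).trans (Nat.lt_floor_add_one _).le
  calc 1 / 4096 * (((1 - s) ^ 2)⁻¹ / 16)⁻¹ * Real.log (1 / (1 - s ^ 2))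
      = Real.log (1 / (1 - s ^ 2)) * ((1 - s) ^ 2 / 256) := by field_simp; ring
    _ ≤ (K + 1 : ℕ) * ((1 - s) ^ 2 / 256) := by gcongr
end
end

section
/- Let f ∈ L⁴(ℍ) and define g on 𝔻² by g(w₁,w₂) = w₂ · f(w₁w₂, w₂). Then ∫_{𝔻²} |g(w₁,w₂)|⁴ |w₂|^{-2} dV(w₁,w₂) = ∫_ℍ |f|⁴ dV, and for every (z₁,z₂) ∈ ℍ one has P f(z₁,z₂) = z₂^{-1} · P_{𝔻²} g(z₁/z₂, z₂), where P is the Bergman projection of ℍ and P_{𝔻²} is the Bergman projection of the bidisc. -/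
open MeasureTheory Complex Set

noncomputable section

/-- The Hartogs triangle `ℍ = {(z₁,z₂) ∈ ℂ² : |z₁| < |z₂| < 1}`. -/
def hartogs : Set (ℂ × ℂ) :=
  {z | ‖z.1‖ < ‖z.2‖ ∧ ‖z.2‖ < 1}

/-- The Bergman kernel of the Hartogs triangle. -/
noncomputable def hartogsKernel (z w : ℂ × ℂ) : ℂ :=
  ((Real.pi : ℂ) ^ 2 * z.2 * (starRingEnd ℂ) w.2 *
    (1 - z.1 * (starRingEnd ℂ) w.1 / (z.2 * (starRingEnd ℂ) w.2)) ^ 2 *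
    (1 - z.2 * (starRingEnd ℂ) w.2) ^ 2)⁻¹

/-- The Bergman projection on the Hartogs triangle. -/
noncomputable def bergmanHartogs (f : ℂ × ℂ → ℂ) (z : ℂ × ℂ) : ℂ :=
  ∫ w in hartogs, hartogsKernel z w * f w

/-!
The substitution `(w₁, w₂) ↦ (w₁ w₂, w₂)` maps the bidisc minus the null set `{w₂ = 0}`
bijectively onto `ℍ`. It is holomorphic with complex Jacobian `w₂`, so its real Jacobian is
`|w₂|²`, and both identities are this change of variables: for the projections, `|w₂|²` times the
Hartogs kernel at `(w₁ w₂, w₂)` equals `z₂⁻¹ w₂` times the bidisc kernel at `(z₁ / z₂, z₂)`.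
-/

def bidiscToHartogs (w : ℂ × ℂ) : ℂ × ℂ := (w.1 * w.2, w.2)

open ContinuousLinearMap in
def fderivBidiscToHartogs (w : ℂ × ℂ) : (ℂ × ℂ) →L[ℂ] ℂ × ℂ :=
  (w.1 • snd ℂ ℂ ℂ + w.2 • fst ℂ ℂ ℂ).prod (snd ℂ ℂ ℂ)

theorem hasFDerivAt_bidiscToHartogs (w : ℂ × ℂ) :
    HasFDerivAt bidiscToHartogs (fderivBidiscToHartogs w) w :=
  hasFDerivAt_fst.mul hasFDerivAt_snd |>.prodMk hasFDerivAt_snd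

theorem det_fderivBidiscToHartogs (w : ℂ × ℂ) : (fderivBidiscToHartogs w).det = w.2 := by
  rw [ContinuousLinearMap.det, ← LinearMap.det_toMatrix (Module.Basis.finTwoProd ℂ),
    Matrix.det_fin_two]
  simp [LinearMap.toMatrix_apply, fderivBidiscToHartogs]

theorem det_restrictScalars_fderivBidiscToHartogs (w : ℂ × ℂ) :
    ((fderivBidiscToHartogs w).restrictScalars ℝ).det = ‖w.2‖ ^ 2 := by
  rw [ContinuousLinearMap.det, ContinuousLinearMap.coe_restrictScalars,
    LinearMap.det_restrictScalars, ← ContinuousLinearMap.det, det_fderivBidiscToHartogs,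
    Algebra.norm_complex_apply, normSq_eq_norm_sq]

theorem isOpen_bidisc : IsOpen bidisc :=
  (isOpen_lt (continuous_norm.comp continuous_fst) continuous_const).inter
    (isOpen_lt (continuous_norm.comp continuous_snd) continuous_const)

theorem volume_setOf_snd_eq_zero : volume {w : ℂ × ℂ | w.2 = 0} = 0 := by
  rw [show {w : ℂ × ℂ | w.2 = 0} = univ ×ˢ {0} by ext; simp, Measure.volume_eq_prod,
    Measure.prod_prod]
  simp

theorem image_bidiscToHartogs_bidisc_diff : bidiscToHartogs '' (bidisc \ {w | w.2 = 0}) = hartogs := by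
  ext z
  constructor
  · rintro ⟨w, ⟨⟨hw₁, hw₂⟩, hw₀⟩, rfl⟩
    have : 0 < ‖w.2‖ := norm_pos_iff.mpr hw₀
    exact ⟨by simpa [bidiscToHartogs] using mul_lt_of_lt_one_left this hw₁, hw₂⟩
  · rintro ⟨hz₁, hz₂⟩
    have hz₀ : 0 < ‖z.2‖ := (norm_nonneg _).trans_lt hz₁
    refine ⟨(z.1 / z.2, z.2), ⟨⟨?_, hz₂⟩, norm_pos_iff.mp hz₀⟩, ?_⟩
    · simpa [norm_div] using (div_lt_one hz₀).mpr hz₁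
    · simp [bidiscToHartogs, div_mul_cancel₀ _ (norm_pos_iff.mp hz₀)]

theorem injOn_bidiscToHartogs : InjOn bidiscToHartogs {w | w.2 ≠ 0} := by
  rintro ⟨a₁, a₂⟩ ha ⟨b₁, b₂⟩ - h
  simp only [bidiscToHartogs, Prod.mk.injEq] at h
  obtain ⟨h₁, rfl⟩ := h
  exact Prod.ext (mul_right_cancel₀ ha h₁) rfl

instance : (volume : Measure (ℂ × ℂ)).IsAddHaarMeasure := by
  rw [Measure.volume_eq_prod]; infer_instance

theorem setIntegral_hartogs {E : Type*} [NormedAddCommGroup E] [NormedSpace ℝ E]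
    (g : ℂ × ℂ → E) :
    ∫ z in hartogs, g z = ∫ w in bidisc, (‖w.2‖ ^ 2) • g (bidiscToHartogs w) := by
  rw [← image_bidiscToHartogs_bidisc_diff, integral_image_eq_integral_abs_det_fderiv_smul volume
    (isOpen_bidisc.measurableSet.diff (measurableSet_eq_fun measurable_snd measurable_const))
    (fun w _ => ((hasFDerivAt_bidiscToHartogs w).restrictScalars ℝ).hasFDerivWithinAt)
    (injOn_bidiscToHartogs.mono fun w hw => hw.2)]
  simp only [det_restrictScalars_fderivBidiscToHartogs, abs_sq]
  exact setIntegral_congr_set (sdiff_null_ae_eq_self volume_setOf_snd_eq_zero)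

-- At `z.2 = 0` or `w.2 = 0` both sides are `0`, through `0⁻¹ = 0`.
theorem sq_norm_mul_hartogsKernel_bidiscToHartogs (z w : ℂ × ℂ) :
    ((‖w.2‖ ^ 2 : ℝ) : ℂ) * hartogsKernel z (bidiscToHartogs w) =
      z.2⁻¹ * (w.2 / ((Real.pi : ℂ) ^ 2 * (1 - z.1 / z.2 * (starRingEnd ℂ) w.1) ^ 2 *
        (1 - z.2 * (starRingEnd ℂ) w.2) ^ 2)) := by
  rcases eq_or_ne w.2 0 with hw | hw
  · simp [hw]
  have hw' : (starRingEnd ℂ) w.2 ≠ 0 := (map_ne_zero _).mpr hw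
  have : z.1 * (starRingEnd ℂ) (w.1 * w.2) / (z.2 * (starRingEnd ℂ) w.2) =
      z.1 / z.2 * (starRingEnd ℂ) w.1 := by
    rw [map_mul]; field_simp
  rw [hartogsKernel, bidiscToHartogs, this, ofReal_pow, ← mul_conj']
  field_simp

theorem bergmanHartogs_eq_bergmanBidisc_general (f : ℂ × ℂ → ℂ) :
    (∫ w in bidisc,
        ‖w.2 * f (w.1 * w.2, w.2)‖ ^ 4 * (‖w.2‖ ^ 2)⁻¹) =
      ∫ z in hartogs, ‖f z‖ ^ 4 ∧
    ∀ z ∈ hartogs,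
      bergmanHartogs f z =
        z.2⁻¹ * bergmanBidisc (fun w => w.2 * f (w.1 * w.2, w.2)) (z.1 / z.2, z.2) := by
  refine ⟨?_, fun z _ => ?_⟩
  · rw [setIntegral_hartogs]
    congr 1 with w
    rcases eq_or_ne ‖w.2‖ 0 with hw | hw
    · simp [hw]
    · rw [norm_mul, smul_eq_mul, bidiscToHartogs]
      field_simp
  · rw [bergmanHartogs, setIntegral_hartogs, bergmanBidisc, ← integral_const_mul]
    congr 1 with w
    rw [real_smul, ← mul_assoc, sq_norm_mul_hartogsKernel_bidiscToHartogs, bidiscToHartogs]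
    ring

/-- For `f ∈ L⁴(ℍ)` and `g(w₁,w₂) = w₂ f(w₁w₂, w₂)` on the bidisc, one has
`∫_{𝔻²} |g|⁴ |w₂|⁻² dV = ∫_ℍ |f|⁴ dV` and
`P f (z₁,z₂) = z₂⁻¹ P_{𝔻²} g (z₁/z₂, z₂)` for every `(z₁,z₂) ∈ ℍ`. -/
theorem bergmanHartogs_eq_bergmanBidisc (f : ℂ × ℂ → ℂ)
    (hf : IntegrableOn (fun z => ‖f z‖ ^ 4) hartogs volume) :
    (∫ w in bidisc,
        ‖w.2 * f (w.1 * w.2, w.2)‖ ^ 4 * (‖w.2‖ ^ 2)⁻¹) =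
      ∫ z in hartogs, ‖f z‖ ^ 4 ∧
    ∀ z ∈ hartogs,
      bergmanHartogs f z =
        z.2⁻¹ * bergmanBidisc (fun w => w.2 * f (w.1 * w.2, w.2)) (z.1 / z.2, z.2) :=
  bergmanHartogs_eq_bergmanBidisc_general f
end
end
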